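/- Let n ≥ 4 and let φ : A_n → A_n be an ℝ-algebra automorphism. Then there exists ε ∈ {1, −1} such that φ(ẽ_0) = ε·ẽ_0, and consequently φ(ã) = ε·(φ(a))~ for every a ∈ A_n. -/

import Mathlib

noncomputable section

open scoped Quaternion

/-- The Cayley–Dickson algebra `A n = ℝ^(2^n)` as a type. -/
def CD : ℕ → Type
  | 0 => ℝ
  | n + 1 => CD n × CD n

namespace CD

instance instAddCommGroup : (n : ℕ) → AddCommGroup (CD n)
  | 0 => inferInstanceAs (AddCommGroup ℝ)
  | n + 1 =>
    letI := instAddCommGroup n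
    inferInstanceAs (AddCommGroup (CD n × CD n))

instance instModule : (n : ℕ) → Module ℝ (CD n)
  | 0 => inferInstanceAs (Module ℝ ℝ)
  | n + 1 =>
    letI := instModule n
    inferInstanceAs (Module ℝ (CD n × CD n))

/-- Conjugation in the Cayley–Dickson algebra. -/
def conj : {n : ℕ} → CD n → CD n
  | 0, x => x
  | _ + 1, x => (conj x.1, -x.2)

/-- Cayley–Dickson multiplication. -/
def mul : {n : ℕ} → CD n → CD n → CD n
  | 0, x, y => Mul.mul (α := ℝ) x y
  | _ + 1, x, y =>
    (mul x.1 y.1 - mul (conj y.2) x.2, mul y.2 x.1 + mul x.2 (conj y.1))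

instance instMul (n : ℕ) : Mul (CD n) := ⟨mul⟩

/-- The multiplicative unit `e₀`. -/
def one : {n : ℕ} → CD n
  | 0 => (1 : ℝ)
  | _ + 1 => (one, 0)

instance instOne (n : ℕ) : One (CD n) := ⟨one⟩

/-- The Euclidean inner product on `A n = ℝ^(2^n)`. -/
def inner : {n : ℕ} → CD n → CD n → ℝ
  | 0, x, y => (x * y : ℝ)
  | _ + 1, x, y => inner x.1 y.1 + inner x.2 y.2

/-- The Euclidean norm on `A n = ℝ^(2^n)`. -/
def norm {n : ℕ} (x : CD n) : ℝ := Real.sqrt (inner x x)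

/-- `ã = (-a₂, a₁)`. -/
def tilde {n : ℕ} (a : CD (n + 1)) : CD (n + 1) := (-a.2, a.1)

/-- `ẽ₀ = (0, e₀)`. -/
def etilde (n : ℕ) : CD (n + 1) := ((0 : CD n), (1 : CD n))

/-- An element is pure if its conjugate is its negative. -/
def IsPure {n : ℕ} (a : CD n) : Prop := conj a = -a

/-- An element of `A (n+1)` is doubly pure if both of its coordinates are pure. -/
def IsDoublyPure {n : ℕ} (a : CD (n + 1)) : Prop := IsPure a.1 ∧ IsPure a.2

/-- The associator `(a,b,c) = (ab)c - a(bc)`. -/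
def assoc {n : ℕ} (a b c : CD n) : CD n := a * b * c - a * (b * c)

/-- An element is alternative if `(a,a,x) = 0` for all `x`. -/
def IsAlternative {n : ℕ} (a : CD n) : Prop := ∀ x : CD n, assoc a a x = 0

/-- An element is strongly alternative if `(a,a,x) = 0` and `(a,x,x) = 0` for all `x`. -/
def IsStronglyAlternative {n : ℕ} (a : CD n) : Prop :=
  (∀ x : CD n, assoc a a x = 0) ∧ (∀ x : CD n, assoc a x x = 0)

/-- The pure (imaginary) part of an element. -/
def im {n : ℕ} (a : CD n) : CD n := (2⁻¹ : ℝ) • (a - conj a)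

/-- `H a`, the span of `{e₀, ã, a, ẽ₀}`. -/
def H {n : ℕ} (a : CD (n + 1)) : Submodule ℝ (CD (n + 1)) :=
  Submodule.span ℝ {(1 : CD (n + 1)), tilde a, a, etilde n}

/-- The orthogonal complement of `H a`. -/
def Hperp {n : ℕ} (a : CD (n + 1)) : Set (CD (n + 1)) :=
  {x | ∀ y ∈ H a, inner y x = 0}

end CD

/-!
Right multiplication by `ẽ₀` is `a ↦ ã`, so everything reduces to `φ(ẽ₀) = ±ẽ₀`. The element
`ẽ₀` satisfies `(ẽ₀, z, z) = 0` for all `z` and `ẽ₀² = -1`, and a surjective ring map carries both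
properties over to `u = φ(ẽ₀)`. In `A_n`, `n ≥ 4`, an element `u = (u₁, u₂)` with `(u, z, z) = 0`
for all `z` has real coordinates: polarizing at `z = (x, 0) + (0, y)` and using `conj x = t - x`
puts `u₁` and `u₂` in the middle nucleus of `A_{n-1}`. That nucleus is `ℝ` because `n - 1 ≥ 3`:
the first coordinate of a middle-nuclear element is central in `A_{n-2}`, whose center is `ℝ`
since `n - 2 ≥ 2`, and the second coordinate is killed by testing against `ẽ₀`. Finally
`u² = -1` forces `u = ±ẽ₀`.
-/

namespace CD

variable {n : ℕ}

@[ext] lemma ext {x y : CD (n + 1)} (h₁ : x.1 = y.1) (h₂ : x.2 = y.2) : x = y := Prod.ext h₁ h₂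

-- An anonymous pair `(a, b)` has type `CD n × CD n`, on which the simp lemmas below do not fire.
def mk (a b : CD n) : CD (n + 1) := (a, b)

@[simp] lemma mk_fst (a b : CD n) : (mk a b).1 = a := rfl
@[simp] lemma mk_snd (a b : CD n) : (mk a b).2 = b := rfl
@[simp] lemma add_fst (x y : CD (n + 1)) : (x + y).1 = x.1 + y.1 := rfl
@[simp] lemma add_snd (x y : CD (n + 1)) : (x + y).2 = x.2 + y.2 := rfl
@[simp] lemma zero_fst : (0 : CD (n + 1)).1 = 0 := rfl
@[simp] lemma zero_snd : (0 : CD (n + 1)).2 = 0 := rfl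
@[simp] lemma neg_fst (x : CD (n + 1)) : (-x).1 = -x.1 := rfl
@[simp] lemma neg_snd (x : CD (n + 1)) : (-x).2 = -x.2 := rfl
@[simp] lemma sub_fst (x y : CD (n + 1)) : (x - y).1 = x.1 - y.1 := rfl
@[simp] lemma sub_snd (x y : CD (n + 1)) : (x - y).2 = x.2 - y.2 := rfl
@[simp] lemma smul_fst (r : ℝ) (x : CD (n + 1)) : (r • x).1 = r • x.1 := rfl
@[simp] lemma smul_snd (r : ℝ) (x : CD (n + 1)) : (r • x).2 = r • x.2 := rfl
@[simp] lemma one_fst : (1 : CD (n + 1)).1 = 1 := rfl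
@[simp] lemma one_snd : (1 : CD (n + 1)).2 = 0 := rfl
@[simp] lemma conj_fst (x : CD (n + 1)) : (conj x).1 = conj x.1 := rfl
@[simp] lemma conj_snd (x : CD (n + 1)) : (conj x).2 = -x.2 := rfl
@[simp] lemma mul_fst (x y : CD (n + 1)) : (x * y).1 = x.1 * y.1 - conj y.2 * x.2 := rfl
@[simp] lemma mul_snd (x y : CD (n + 1)) : (x * y).2 = y.2 * x.1 + x.2 * conj y.1 := rfl
@[simp] lemma etilde_fst : (etilde n).1 = 0 := rfl
@[simp] lemma etilde_snd : (etilde n).2 = 1 := rfl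
@[simp] lemma tilde_fst (x : CD (n + 1)) : (tilde x).1 = -x.2 := rfl
@[simp] lemma tilde_snd (x : CD (n + 1)) : (tilde x).2 = x.1 := rfl

@[simp] lemma conj_add (x y : CD n) : conj (x + y) = conj x + conj y := by
  induction n with
  | zero => rfl
  | succ n ih => ext <;> simp [ih, add_comm]

@[simp] lemma conj_smul (r : ℝ) (x : CD n) : conj (r • x) = r • conj x := by
  induction n with
  | zero => rfl
  | succ n ih => ext <;> simp [ih]

@[simp] lemma conj_conj (x : CD n) : conj (conj x) = x := by
  induction n with
  | zero => rfl
  | succ n ih => ext <;> simp [ih]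

@[simp] lemma conj_one : conj (1 : CD n) = 1 := by
  induction n with
  | zero => rfl
  | succ n ih => ext <;> simp [ih]

@[simp] lemma conj_zero : conj (0 : CD n) = 0 := by
  simpa using conj_smul 0 (0 : CD n)

@[simp] lemma conj_neg (x : CD n) : conj (-x) = -conj x := by
  simpa using conj_smul (-1) x

@[simp] lemma conj_sub (x y : CD n) : conj (x - y) = conj x - conj y := by
  simp [sub_eq_add_neg]

lemma mul_add_and_add_mul :
    (∀ x y z : CD n, x * (y + z) = x * y + x * z) ∧
      ∀ x y z : CD n, (x + y) * z = x * z + y * z := by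
  induction n with
  | zero => exact ⟨mul_add (R := ℝ), add_mul (R := ℝ)⟩
  | succ n ih =>
    obtain ⟨h₁, h₂⟩ := ih
    constructor <;> intro x y z <;> ext <;>
      simp only [mul_fst, mul_snd, add_fst, add_snd, conj_add, h₁, h₂] <;> abel

lemma smul_mul_and_mul_smul :
    (∀ (r : ℝ) (x y : CD n), r • x * y = r • (x * y)) ∧
      ∀ (r : ℝ) (x y : CD n), x * r • y = r • (x * y) := by
  induction n with
  | zero => exact ⟨smul_mul_assoc (α := ℝ) (β := ℝ), mul_smul_comm (α := ℝ) (β := ℝ)⟩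
  | succ n ih =>
    obtain ⟨h₁, h₂⟩ := ih
    constructor <;> intro r x y <;> ext <;> simp [h₁, h₂, smul_sub]

protected lemma mul_smul (r : ℝ) (x y : CD n) : x * r • y = r • (x * y) :=
  smul_mul_and_mul_smul.2 r x y

protected lemma zero_mul (x : CD n) : 0 * x = 0 := by
  simpa using smul_mul_and_mul_smul.1 0 0 x

protected lemma mul_zero (x : CD n) : x * 0 = 0 := by
  simpa using CD.mul_smul 0 x 0

lemma one_mul_and_mul_one : (∀ x : CD n, 1 * x = x) ∧ ∀ x : CD n, x * 1 = x := by
  induction n with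
  | zero => exact ⟨one_mul (M := ℝ), mul_one (M := ℝ)⟩
  | succ n ih =>
    constructor <;> intro x <;> ext <;> simp [ih.1, ih.2, CD.zero_mul, CD.mul_zero]

-- Scoped, so that outside `CD` the arithmetic keeps elaborating through `instAddCommGroup`,
-- `instMul` and `instOne`.
scoped instance instNonAssocRing : NonAssocRing (CD n) where
  __ := instAddCommGroup n
  __ := instMul n
  __ := instOne n
  left_distrib := mul_add_and_add_mul.1
  right_distrib := mul_add_and_add_mul.2
  zero_mul := CD.zero_mul
  mul_zero := CD.mul_zero
  one_mul := one_mul_and_mul_one.1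
  mul_one := one_mul_and_mul_one.2

scoped instance : IsScalarTower ℝ (CD n) (CD n) := ⟨smul_mul_and_mul_smul.1⟩

scoped instance : SMulCommClass ℝ (CD n) (CD n) := ⟨fun r x y => (CD.mul_smul r x y).symm⟩

scoped instance : IsAddTorsionFree (CD n) := .of_isTorsionFree ℝ _

lemma smul_one_injective : Function.Injective fun r : ℝ => r • (1 : CD n) := by
  induction n with
  | zero =>
    intro s t h
    have h' : s * 1 = t * 1 := h
    simpa using h'
  | succ n ih => intro s t h; exact ih (congrArg Prod.fst h)

lemma exists_conj_eq_smul_one_sub (x : CD n) : ∃ t : ℝ, conj x = t • 1 - x := by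
  induction n with
  | zero =>
    let r : ℝ := x
    exact ⟨2 * r, show r = 2 * r * 1 - r by ring⟩
  | succ n ih =>
    obtain ⟨t, ht⟩ := ih x.1
    exact ⟨t, by ext <;> simp [ht]⟩

lemma exists_eq_smul_one_of_conj_eq {c : CD n} (h : conj c = c) : ∃ r : ℝ, c = r • 1 := by
  obtain ⟨t, ht⟩ := exists_conj_eq_smul_one_sub c
  have h2c : t • (1 : CD n) = (2 : ℝ) • c := by
    rw [h, eq_sub_iff_add_eq] at ht
    rw [two_smul, ht]
  refine ⟨2⁻¹ * t, ?_⟩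
  rw [mul_smul, h2c, smul_smul]
  norm_num

lemma conj_mul (x y : CD n) : conj (x * y) = conj y * conj x := by
  induction n with
  | zero => exact mul_comm (G := ℝ) x y
  | succ n ih => ext1 <;> simp [ih]

lemma mul_conj_comm (x : CD n) : x * conj x = conj x * x := by
  obtain ⟨t, ht⟩ := exists_conj_eq_smul_one_sub x
  rw [ht, mul_sub, sub_mul, mul_smul_comm, smul_mul_assoc, mul_one, one_mul]

lemma mul_etilde (x : CD (n + 1)) : x * etilde n = tilde x := by
  ext <;> simp

lemma etilde_mul_etilde : etilde n * etilde n = -1 := by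
  ext <;> simp

lemma conj_etilde : conj (etilde n) = -etilde n := by
  ext <;> simp

lemma eq_zero_of_mul_conj_eq_mul {d : CD (n + 1)} (h : ∀ y, d * conj y = d * y) : d = 0 := by
  have h := h (etilde n)
  rw [conj_etilde, mul_neg, mul_etilde, neg_eq_self] at h
  ext
  · simpa using congrArg Prod.snd h
  · simpa using congrArg Prod.fst h

lemma exists_eq_smul_one_of_forall_mul_comm (c : CD (n + 2)) (h : ∀ y, c * y = y * c) :
    ∃ r : ℝ, c = r • 1 := by
  have he := h (etilde (n + 1))
  rw [mul_etilde] at he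
  have hc₁ : conj c.1 = c.1 := by simpa using (congrArg Prod.snd he).symm
  have hc₂ : c.2 = 0 := eq_zero_of_mul_conj_eq_mul fun y => by
    simpa using congrArg Prod.snd (h (mk y 0))
  exact exists_eq_smul_one_of_conj_eq (by ext <;> simp [hc₁, hc₂])

lemma eq_zero_of_forall_tilde_mul (d : CD (n + 2)) (h : ∀ x, tilde (d * x) = tilde d * x) :
    d = 0 := by
  refine ext (eq_zero_of_mul_conj_eq_mul fun z => ?_) (eq_zero_of_mul_conj_eq_mul fun z => ?_)
  · simpa using (congrArg Prod.snd (h (mk z 0))).symm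
  · simpa using congrArg Prod.fst (h (mk z 0))

lemma exists_eq_smul_one_of_forall_mul_assoc (c : CD (n + 3))
    (h : ∀ x y, x * c * y = x * (c * y)) : ∃ r : ℝ, c = r • 1 := by
  have hc₁ : ∀ x, c.1 * x = x * c.1 := fun x => by
    simpa using (congrArg Prod.snd (h (mk x 0) (mk 0 1))).symm
  obtain ⟨r, hr⟩ := exists_eq_smul_one_of_forall_mul_comm c.1 hc₁
  have hc₂ : c.2 = 0 := eq_zero_of_forall_tilde_mul c.2 fun x => by
    simpa [← mul_etilde] using congrArg Prod.snd (h (mk x 0) (mk (conj (etilde (n + 1))) 0))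
  exact ⟨r, by ext <;> simp [hr, hc₂]⟩

lemma assoc_etilde_self_self (z : CD (n + 1)) : assoc (etilde n) z z = 0 := by
  obtain ⟨t, ht⟩ := exists_conj_eq_smul_one_sub z.1
  ext1
  · simp [assoc, ht, mul_sub, mul_smul_comm]
    abel
  · simp [assoc, conj_mul, mul_conj_comm]
    abel

lemma assoc_add_assoc_swap_eq_zero {a : CD n} (h : ∀ z, assoc a z z = 0) (x y : CD n) :
    assoc a x y + assoc a y x = 0 := by
  calc assoc a x y + assoc a y x = assoc a (x + y) (x + y) - assoc a x x - assoc a y y := by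
        simp only [assoc, mul_add, add_mul]; abel
    _ = 0 := by rw [h, h, h, sub_zero, sub_zero]

lemma exists_fst_snd_eq_smul_one_of_assoc_self (a : CD (n + 4)) (h : ∀ z, assoc a z z = 0) :
    (∃ β : ℝ, a.1 = β • 1) ∧ ∃ γ : ℝ, a.2 = γ • 1 := by
  have key : ∀ x y : CD (n + 3), assoc a (mk x 0) (mk 0 y) + assoc a (mk 0 y) (mk x 0) = 0 :=
    fun x y => assoc_add_assoc_swap_eq_zero h _ _
  -- With `conj x = t • 1 - x`, the second and the first coordinate of `key` are the middle
  -- nucleus identities for `a.1` and `a.2`.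
  refine ⟨exists_eq_smul_one_of_forall_mul_assoc a.1 fun y x => ?_,
    exists_eq_smul_one_of_forall_mul_assoc a.2 fun z x => ?_⟩
  · obtain ⟨t, ht⟩ := exists_conj_eq_smul_one_sub x
    have := congrArg Prod.snd (key x y)
    simp [assoc, ht, mul_sub, sub_mul, mul_smul_comm, smul_mul_assoc] at this
    exact (sub_eq_zero.mp this).symm
  · obtain ⟨t, ht⟩ := exists_conj_eq_smul_one_sub x
    have := congrArg Prod.fst (key x (conj z))
    simp [assoc, ht, mul_sub, sub_mul, mul_smul_comm, smul_mul_assoc, conj_mul] at this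
    exact (add_neg_eq_zero.mp this).symm

lemma map_assoc (f : CD n →+* CD n) (a b c : CD n) :
    f (assoc a b c) = assoc (f a) (f b) (f c) := by
  simp [assoc]

lemma eq_smul_etilde_of_assoc_self_of_mul_self (u : CD (n + 4)) (h : ∀ z, assoc u z z = 0)
    (hu : u * u = -1) : ∃ ε : ℝ, (ε = 1 ∨ ε = -1) ∧ u = ε • etilde (n + 3) := by
  obtain ⟨⟨β, hβ⟩, γ, hγ⟩ := exists_fst_snd_eq_smul_one_of_assoc_self u h
  have h₁ : β * β - γ * γ = -1 := smul_one_injective (n := n + 3) <| by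
    simpa [hβ, hγ, smul_smul, sub_smul] using congrArg Prod.fst hu
  have h₂ : β * γ + β * γ = 0 := smul_one_injective (n := n + 3) <| by
    simpa [hβ, hγ, smul_smul, add_smul, mul_comm] using congrArg Prod.snd hu
  have hβ₀ : β = 0 := by
    rcases mul_eq_zero.mp (show β * γ = 0 by linarith) with hβ₀ | hγ₀
    · exact hβ₀
    · nlinarith [mul_self_nonneg β]
  refine ⟨γ, mul_self_eq_one_iff.mp (by linarith [hβ₀ ▸ h₁]), ?_⟩
  ext1 <;> simp [hβ, hγ, hβ₀]

lemma map_etilde_eq_smul_etilde {φ : CD (n + 4) → CD (n + 4)} (hφ : Function.Surjective φ)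
    (hadd : ∀ x y, φ (x + y) = φ x + φ y) (hmul : ∀ x y, φ (x * y) = φ x * φ y) (hone : φ 1 = 1) :
    ∃ ε : ℝ, (ε = 1 ∨ ε = -1) ∧ φ (etilde (n + 3)) = ε • etilde (n + 3) := by
  let f : CD (n + 4) →+* CD (n + 4) :=
    { AddMonoidHom.mk' φ hadd with map_one' := hone, map_mul' := hmul }
  apply eq_smul_etilde_of_assoc_self_of_mul_self
  · intro z
    obtain ⟨w, rfl⟩ := hφ z
    refine (map_assoc f _ w w).symm.trans ?_
    rw [assoc_etilde_self_self, map_zero]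
  · refine (map_mul f _ _).symm.trans ?_
    rw [etilde_mul_etilde, map_neg, map_one]

end CD

theorem automorphism_etilde_general (n : ℕ) (hn : 4 ≤ n + 1) (φ : CD (n + 1) → CD (n + 1))
    (hbij : Function.Bijective φ)
    (hadd : ∀ x y, φ (x + y) = φ x + φ y)
    (hmul : ∀ x y, φ (x * y) = φ x * φ y)
    (hone : φ 1 = 1) :
    ∃ ε : ℝ, (ε = 1 ∨ ε = -1) ∧ φ (CD.etilde n) = ε • CD.etilde n ∧
      ∀ a : CD (n + 1), φ (CD.tilde a) = ε • CD.tilde (φ a) := by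
  obtain ⟨m, rfl⟩ : ∃ m, n = m + 3 := ⟨n - 3, by omega⟩
  obtain ⟨ε, hε, hφ⟩ := CD.map_etilde_eq_smul_etilde hbij.2 hadd hmul hone
  refine ⟨ε, hε, hφ, fun a => ?_⟩
  rw [← CD.mul_etilde, hmul, hφ, CD.mul_smul, CD.mul_etilde]

/-- For `n ≥ 4`, every ℝ-algebra automorphism `φ` of `A n` satisfies
`φ(ẽ₀) = ±ẽ₀` and correspondingly `φ(ã) = ±(φ a)~`. -/
theorem automorphism_etilde (n : ℕ) (hn : 4 ≤ n + 1) (φ : CD (n + 1) → CD (n + 1))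
    (hbij : Function.Bijective φ)
    (hadd : ∀ x y, φ (x + y) = φ x + φ y)
    (hsmul : ∀ (r : ℝ) (x : CD (n + 1)), φ (r • x) = r • φ x)
    (hmul : ∀ x y, φ (x * y) = φ x * φ y)
    (hone : φ 1 = 1) :
    ∃ ε : ℝ, (ε = 1 ∨ ε = -1) ∧ φ (CD.etilde n) = ε • CD.etilde n ∧
      ∀ a : CD (n + 1), φ (CD.tilde a) = ε • CD.tilde (φ a) :=
  automorphism_etilde_general n hn φ hbij hadd hmul hone
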